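/- arXiv:2601.11668 — 2 statements merged into one kernel-verified Lean document; each statement's English description precedes it below -/
import Mathlib

section
/- Every equilibrium of the drift field is disease-free: let y = (s, i, h_S, h_I) be a state with s_k ≥ 0, i_k ≥ 0, h_{S,l} ≥ 0, 0 ≤ h_{I,l} < 1 for all k, l. If μ^S_k(y) = 0 and μ^I_k(y) = 0 for every k = 1,…,K, and μ^{S,h}_l(y) = 0 and μ^{I,h}_l(y) = 0 for every l = 1,…,L, then i_k = 0 for all k and h_{I,l} = 0 for all l. -/
/-- Every equilibrium of the drift field is disease-free: if all
drift components vanish at a state `y = (s, i, h_S, h_I)` with `s_k ≥ 0`,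
`i_k ≥ 0`, `h_{S,l} ≥ 0`, `0 ≤ h_{I,l} < 1`, then `i_k = 0` for all `k` and
`h_{I,l} = 0` for all `l`. -/
theorem equilibrium_is_disease_free
    (K L : ℕ) (hK : 1 ≤ K) (hL : 1 ≤ L)
    (α : ℝ) (hα : 0 < α)
    (β : Fin K → ℝ) (hβ : ∀ k, 0 < β k)
    (ν : Fin L → ℝ) (hν : ∀ l, 0 < ν l)
    (N : Fin K → ℝ) (hN : ∀ k, 0 < N k)
    (NH : Fin K → ℝ) (hNH : ∀ k, 0 < NH k)
    (H : Fin L → ℝ) (hH : ∀ l, 0 < H l)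
    (z : Fin K → Fin L → ℝ) (hz : ∀ k l, z k l = 0 ∨ z k l = 1)
    (cp ch : Fin K → Fin K → ℝ)
    (hcp : ∀ k j, 0 ≤ cp k j) (hch : ∀ k j, 0 ≤ ch k j)
    -- the state
    (s i : Fin K → ℝ) (hS hI : Fin L → ℝ)
    (hs_nonneg : ∀ k, 0 ≤ s k) (hi_nonneg : ∀ k, 0 ≤ i k)
    (hhS_nonneg : ∀ l, 0 ≤ hS l)
    (hhI_mem : ∀ l, hI l ∈ Set.Ico (0 : ℝ) 1)
    -- the coupled contact rate
    (c : Fin K → Fin K → ℝ)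
    (hc : ∀ k j, c k j =
      cp k j + (∑ l : Fin L, z k l * hI l * H l) *
        (∑ l : Fin L, z k l * (1 - hI l)⁻¹) * ch k j / NH k)
    -- all drift components vanish
    (hμS : ∀ k, -α * s k * ∑ j : Fin K, c k j * i j = 0)
    (hμI : ∀ k, α * s k * (∑ j : Fin K, c k j * i j) - β k * i k = 0)
    (hμSh : ∀ l, -α * (hS l / H l) *
      ∑ k : Fin K, z k l * N k * s k * ∑ j : Fin K, cp k j * i j = 0)
    (hμIh : ∀ l, α * (hS l / H l) *
      (∑ k : Fin K, z k l * N k * s k * ∑ j : Fin K, cp k j * i j) - ν l * hI l = 0) :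
    (∀ k, i k = 0) ∧ (∀ l, hI l = 0) := by
  have hi0 : ∀ k, i k = 0 := by
    intro k
    have h1 := hμS k
    have h2 := hμI k
    have hb : β k * i k = 0 := by nlinarith [h1, h2]
    rcases mul_eq_zero.mp hb with h | h
    · linarith [hβ k]
    · exact h
  refine ⟨hi0, fun l => ?_⟩
  have h := hμIh l
  have hsum : (∑ k : Fin K, z k l * N k * s k * ∑ j : Fin K, cp k j * i j) = 0 := by
    apply Finset.sum_eq_zero
    intro k _
    have : (∑ j : Fin K, cp k j * i j) = 0 := by
      apply Finset.sum_eq_zero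
      intro j _
      rw [hi0 j]; ring
    rw [this]; ring
  rw [hsum] at h
  have := hν l
  have : ν l * hI l = 0 := by linarith
  rcases mul_eq_zero.mp this with h' | h'
  · linarith [hν l]
  · exact h'
end

section
/- Hölder-1/2 modulus of continuity of the diffusion: for every integer n ≥ 2, let U_n = { y ∈ D : h_{I,l} ≤ 1 − 1/n for all l = 1,…,L }. Then there exists a constant C ≥ 0 such that for all y, y' ∈ U_n, ‖σ(y) − σ(y')‖² ≤ C ‖y − y'‖, where σ(y) ∈ ℝ^{3K+3L} collects all diffusion coefficients (σ^{SS}_k(y), σ^{SI}_k(y), σ^{II}_k(y))_{k=1,…,K} and (σ^{SS,h}_l(y), σ^{SI,h}_l(y), σ^{II,h}_l(y))_{l=1,…,L}. Equivalently, with κ(u) = C√u, the Yamada–Watanabe modulus condition ‖σ(y) − σ(y')‖² ≤ κ(‖y − y'‖²) holds on U_n. -/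
/-!
Every diffusion coefficient is `±√` of a radicand, and the radicands form a `C¹` map on the open
set `{h_I < 1}`, which contains the compact set `U_n`; so they are Lipschitz on `U_n`.
Since `|√a - √b| ≤ √|a - b|`, the square roots inherit a Hölder-`1/2` bound.
-/

open Real

lemma abs_sqrt_sub_sqrt_le_sqrt_abs_sub (a b : ℝ) : |√a - √b| ≤ √|a - b| := by
  wlog hba : b ≤ a generalizing a b
  · rw [abs_sub_comm, abs_sub_comm a]
    exact this b a (le_of_not_ge hba)
  have hq : 0 ≤ √b := sqrt_nonneg b
  have hqp : √b ≤ √a := sqrt_le_sqrt hba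
  rw [abs_of_nonneg (sub_nonneg.2 hqp), le_sqrt (sub_nonneg.2 hqp) (abs_nonneg _)]
  have hsq : √a ^ 2 - √b ^ 2 ≤ |a - b| := by
    rw [sq_sqrt', sq_sqrt', abs_of_nonneg (sub_nonneg.2 hba)]
    rcases le_total 0 b with hb | hb
    · rw [max_eq_left hb, max_eq_left (hb.trans hba)]
    · rw [max_eq_right hb, sub_zero]
      exact max_le (by linarith) (by linarith)
  nlinarith

lemma norm_sqrt_comp_sub_le {ι : Type*} [Fintype ι] (u v : ι → ℝ) :
    ‖(fun i => √(u i)) - fun i => √(v i)‖ ≤ √‖u - v‖ := by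
  refine (pi_norm_le_iff_of_nonneg (sqrt_nonneg _)).2 fun i => ?_
  calc ‖√(u i) - √(v i)‖ ≤ √|u i - v i| := abs_sqrt_sub_sqrt_le_sqrt_abs_sub _ _
    _ ≤ √‖u - v‖ := sqrt_le_sqrt (norm_le_pi_norm (u - v) i)

lemma norm_neg_sqrt_comp_sub_le {ι : Type*} [Fintype ι] (u v : ι → ℝ) :
    ‖(fun i => -√(u i)) - fun i => -√(v i)‖ ≤ √‖u - v‖ := by
  rw [show (fun i => -√(u i)) = -fun i => √(u i) from rfl,
    show (fun i => -√(v i)) = -fun i => √(v i) from rfl, neg_sub_neg, norm_sub_rev]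
  exact norm_sqrt_comp_sub_le u v

lemma LocallyLipschitzOn.of_contDiffAt {E F : Type*} [NormedAddCommGroup E] [NormedSpace ℝ E]
    [NormedAddCommGroup F] [NormedSpace ℝ F] {f : E → F} {s : Set E}
    (hf : ∀ x ∈ s, ContDiffAt ℝ 1 f x) : LocallyLipschitzOn s f := fun x hx =>
  let ⟨K, t, ht, hK⟩ := (hf x hx).exists_lipschitzOnWith
  ⟨K, t, nhdsWithin_le_nhds ht, hK⟩

abbrev EpidemicState (ι κ : Type*) : Type _ := (ι → ℝ) × (ι → ℝ) × (κ → ℝ) × (κ → ℝ)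

section

variable {ι κ : Type*} [Fintype ι] [Fintype κ]

noncomputable def sqrtDiffusion (r : EpidemicState ι κ) :
    ((ι → ℝ) × (ι → ℝ) × (ι → ℝ)) × ((κ → ℝ) × (κ → ℝ) × (κ → ℝ)) :=
  ((fun i => √(r.1 i), fun i => -√(r.1 i), fun i => √(r.2.1 i)),
   (fun l => √(r.2.2.1 l), fun l => -√(r.2.2.1 l), fun l => √(r.2.2.2 l)))

lemma norm_sqrtDiffusion_sub_le (r r' : EpidemicState ι κ) :
    ‖sqrtDiffusion r - sqrtDiffusion r'‖ ≤ √‖r - r'‖ := by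
  have h₁ : √‖r.1 - r'.1‖ ≤ √‖r - r'‖ := sqrt_le_sqrt (norm_fst_le (r - r'))
  have h₂ : √‖r.2.1 - r'.2.1‖ ≤ √‖r - r'‖ :=
    sqrt_le_sqrt ((norm_fst_le (r - r').2).trans (norm_snd_le _))
  have h₃ : √‖r.2.2.1 - r'.2.2.1‖ ≤ √‖r - r'‖ :=
    sqrt_le_sqrt (((norm_fst_le (r - r').2.2).trans (norm_snd_le _)).trans (norm_snd_le _))
  have h₄ : √‖r.2.2.2 - r'.2.2.2‖ ≤ √‖r - r'‖ :=
    sqrt_le_sqrt (((norm_snd_le (r - r').2.2).trans (norm_snd_le _)).trans (norm_snd_le _))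
  simp only [sqrtDiffusion, Prod.mk_sub_mk, Prod.norm_mk]
  refine max_le (max_le ?_ (max_le ?_ ?_)) (max_le ?_ (max_le ?_ ?_))
  · exact (norm_sqrt_comp_sub_le _ _).trans h₁
  · exact (norm_neg_sqrt_comp_sub_le _ _).trans h₁
  · exact (norm_sqrt_comp_sub_le _ _).trans h₂
  · exact (norm_sqrt_comp_sub_le _ _).trans h₃
  · exact (norm_neg_sqrt_comp_sub_le _ _).trans h₃
  · exact (norm_sqrt_comp_sub_le _ _).trans h₄

lemma sq_norm_sqrtDiffusion_comp_sub_le {E : Type*} [SeminormedAddCommGroup E]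
    {r : E → EpidemicState ι κ} {C : NNReal} {s : Set E}
    (hr : LipschitzOnWith C r s) {y y' : E} (hy : y ∈ s) (hy' : y' ∈ s) :
    ‖sqrtDiffusion (r y) - sqrtDiffusion (r y')‖ ^ 2 ≤ C * ‖y - y'‖ :=
  calc ‖sqrtDiffusion (r y) - sqrtDiffusion (r y')‖ ^ 2 ≤ √‖r y - r y'‖ ^ 2 :=
        pow_le_pow_left₀ (norm_nonneg _) (norm_sqrtDiffusion_sub_le _ _) 2
    _ = ‖r y - r y'‖ := sq_sqrt (norm_nonneg _)
    _ ≤ C * ‖y - y'‖ := hr.norm_sub_le hy hy'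

end

section

variable {ι κ : Type*}

def truncatedDomain (ε : ℝ) : Set (EpidemicState ι κ) :=
  { y | (∀ k, 0 ≤ y.1 k) ∧ (∀ k, 0 ≤ y.2.1 k) ∧
    (∀ l, 0 ≤ y.2.2.1 l) ∧ (∀ l, 0 ≤ y.2.2.2 l) ∧
    (∀ k, y.1 k + y.2.1 k ≤ 1) ∧ (∀ l, y.2.2.1 l + y.2.2.2 l ≤ 1) ∧
    (∀ l, y.2.2.2 l ≤ 1 - ε) }

lemma truncatedDomain_subset_Icc (ε : ℝ) :
    (truncatedDomain ε : Set (EpidemicState ι κ)) ⊆ Set.Icc 0 1 := by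
  rintro y ⟨hs, hi, hhs, hhi, hsi, hh, -⟩
  simp only [Set.mem_Icc, Prod.le_def, Pi.le_def, Prod.fst_zero, Prod.snd_zero, Prod.fst_one,
    Prod.snd_one, Pi.zero_apply, Pi.one_apply]
  refine ⟨⟨hs, hi, hhs, hhi⟩, fun k => ?_, fun k => ?_, fun l => ?_, fun l => ?_⟩
  · linarith [hi k, hsi k]
  · linarith [hs k, hsi k]
  · linarith [hhi l, hh l]
  · linarith [hhs l, hh l]

lemma isClosed_truncatedDomain (ε : ℝ) :
    IsClosed (truncatedDomain ε : Set (EpidemicState ι κ)) := by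
  simp only [truncatedDomain, Set.ofPred_and, Set.ofPred_forall]
  repeat' apply IsClosed.inter
  all_goals exact isClosed_iInter fun _ => isClosed_le (by fun_prop) (by fun_prop)

lemma isCompact_truncatedDomain (ε : ℝ) :
    IsCompact (truncatedDomain ε : Set (EpidemicState ι κ)) :=
  isCompact_Icc.of_isClosed_subset (isClosed_truncatedDomain ε) (truncatedDomain_subset_Icc ε)

lemma lt_one_of_mem_truncatedDomain {ε : ℝ} (hε : 0 < ε)
    {y : EpidemicState ι κ} (hy : y ∈ truncatedDomain ε) (l : κ) :
    y.2.2.2 l < 1 := by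
  linarith [hy.2.2.2.2.2.2 l]

variable [Fintype ι] [Fintype κ] (α : ℝ) (β N NH : ι → ℝ) (ν H : κ → ℝ) (z : ι → κ → ℝ)
  (cp ch : ι → ι → ℝ)

noncomputable def diffusionRadicand (y : EpidemicState ι κ) :
    EpidemicState ι κ :=
  (fun k => α / N k * y.1 k * ∑ j, (cp k j + (∑ l, z k l * y.2.2.2 l * H l) *
      (∑ l, z k l * (1 - y.2.2.2 l)⁻¹) * ch k j / NH k) * y.2.1 j,
   fun k => β k * y.2.1 k / N k,
   fun l => α / H l * (y.2.2.1 l / H l) *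
      ∑ k, z k l * N k * y.1 k * ∑ j, cp k j * y.2.1 j,
   fun l => ν l * y.2.2.2 l / H l)

lemma contDiffAt_diffusionRadicand {y : EpidemicState ι κ}
    (hy : ∀ l, y.2.2.2 l < 1) : ContDiffAt ℝ 1 (diffusionRadicand α β N NH ν H z cp ch) y := by
  have hne : ∀ l, 1 - y.2.2.2 l ≠ 0 := fun l => (sub_pos.2 (hy l)).ne'
  unfold diffusionRadicand
  fun_prop (disch := exact hne _)

end

theorem diffusion_holder_half_general
    (K L : ℕ) (α : ℝ) (β : Fin K → ℝ) (ν : Fin L → ℝ) (N : Fin K → ℝ) (NH : Fin K → ℝ)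
    (H : Fin L → ℝ) (z : Fin K → Fin L → ℝ) (cp ch : Fin K → Fin K → ℝ)
    (n : ℕ) (hn : 2 ≤ n)
    -- the set Uₙ inside the physical domain D
    (Un : Set ((Fin K → ℝ) × (Fin K → ℝ) × (Fin L → ℝ) × (Fin L → ℝ)))
    (hUn : Un = { y | (∀ k, 0 ≤ y.1 k) ∧ (∀ k, 0 ≤ y.2.1 k) ∧
      (∀ l, 0 ≤ y.2.2.1 l) ∧ (∀ l, 0 ≤ y.2.2.2 l) ∧
      (∀ k, y.1 k + y.2.1 k ≤ 1) ∧ (∀ l, y.2.2.1 l + y.2.2.2 l ≤ 1) ∧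
      (∀ l, y.2.2.2 l ≤ 1 - 1 / (n : ℝ)) })
    -- the coupled contact rate as a function of the state
    (c : ((Fin K → ℝ) × (Fin K → ℝ) × (Fin L → ℝ) × (Fin L → ℝ)) →
      Fin K → Fin K → ℝ)
    (hc : ∀ y k j, c y k j =
      cp k j + (∑ l : Fin L, z k l * y.2.2.2 l * H l) *
        (∑ l : Fin L, z k l * (1 - y.2.2.2 l)⁻¹) * ch k j / NH k)
    -- the diffusion map, collecting all 3K + 3L coefficients
    (σ : ((Fin K → ℝ) × (Fin K → ℝ) × (Fin L → ℝ) × (Fin L → ℝ)) →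
      ((Fin K → ℝ) × (Fin K → ℝ) × (Fin K → ℝ)) ×
      ((Fin L → ℝ) × (Fin L → ℝ) × (Fin L → ℝ)))
    (hσ : ∀ y, σ y =
      ((fun k => Real.sqrt (α / N k * y.1 k * ∑ j : Fin K, c y k j * y.2.1 j),
        fun k => -Real.sqrt (α / N k * y.1 k * ∑ j : Fin K, c y k j * y.2.1 j),
        fun k => Real.sqrt (β k * y.2.1 k / N k)),
       (fun l => Real.sqrt (α / H l * (y.2.2.1 l / H l) *
          ∑ k : Fin K, z k l * N k * y.1 k * ∑ j : Fin K, cp k j * y.2.1 j),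
        fun l => -Real.sqrt (α / H l * (y.2.2.1 l / H l) *
          ∑ k : Fin K, z k l * N k * y.1 k * ∑ j : Fin K, cp k j * y.2.1 j),
        fun l => Real.sqrt (ν l * y.2.2.2 l / H l)))) :
    ∃ C : ℝ, 0 ≤ C ∧
      (∀ y ∈ Un, ∀ y' ∈ Un, ‖σ y - σ y'‖ ^ 2 ≤ C * ‖y - y'‖) ∧
      (∀ y ∈ Un, ∀ y' ∈ Un,
        ‖σ y - σ y'‖ ^ 2 ≤ C * Real.sqrt (‖y - y'‖ ^ 2)) := by
  have hε : (0 : ℝ) < 1 / (n : ℝ) := one_div_pos.2 (by exact_mod_cast (by omega : 0 < n))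
  have hσr : ∀ y, σ y = sqrtDiffusion (diffusionRadicand α β N NH ν H z cp ch y) := by
    intro y
    rw [hσ]
    simp only [hc]
    rfl
  have hU : Un = truncatedDomain (1 / (n : ℝ)) := hUn
  obtain ⟨C, hC⟩ := (LocallyLipschitzOn.of_contDiffAt fun y hy =>
    contDiffAt_diffusionRadicand α β N NH ν H z cp ch
      (lt_one_of_mem_truncatedDomain hε (hU ▸ hy))).exists_lipschitzOnWith_of_compact
    (hU ▸ isCompact_truncatedDomain _)
  have key : ∀ y ∈ Un, ∀ y' ∈ Un, ‖σ y - σ y'‖ ^ 2 ≤ C * ‖y - y'‖ := fun y hy y' hy' => by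
    rw [hσr, hσr]
    exact sq_norm_sqrtDiffusion_comp_sub_le hC hy hy'
  refine ⟨C, C.2, key, fun y hy y' hy' => ?_⟩
  rw [Real.sqrt_sq (norm_nonneg _)]
  exact key y hy y' hy'

/-- Hölder-1/2 modulus of continuity of the diffusion map on
`U_n = { y ∈ D : h_{I,l} ≤ 1 − 1/n for all l }`: there exists `C ≥ 0` such
that `‖σ(y) − σ(y')‖² ≤ C ‖y − y'‖` for all `y, y' ∈ U_n`; equivalently, with
`κ(u) = C √u`, the Yamada–Watanabe modulus condition
`‖σ(y) − σ(y')‖² ≤ κ(‖y − y'‖²)` holds on `U_n`. The map `σ` collects all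
`3K + 3L` diffusion coefficients. -/
theorem diffusion_holder_half
    (K L : ℕ) (hK : 1 ≤ K) (hL : 1 ≤ L)
    (α : ℝ) (hα : 0 < α)
    (β : Fin K → ℝ) (hβ : ∀ k, 0 < β k)
    (ν : Fin L → ℝ) (hν : ∀ l, 0 < ν l)
    (N : Fin K → ℝ) (hN : ∀ k, 0 < N k)
    (NH : Fin K → ℝ) (hNH : ∀ k, 0 < NH k)
    (H : Fin L → ℝ) (hH : ∀ l, 0 < H l)
    (z : Fin K → Fin L → ℝ) (hz : ∀ k l, z k l = 0 ∨ z k l = 1)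
    (cp ch : Fin K → Fin K → ℝ)
    (hcp : ∀ k j, 0 ≤ cp k j) (hch : ∀ k j, 0 ≤ ch k j)
    (n : ℕ) (hn : 2 ≤ n)
    -- the set Uₙ inside the physical domain D
    (Un : Set ((Fin K → ℝ) × (Fin K → ℝ) × (Fin L → ℝ) × (Fin L → ℝ)))
    (hUn : Un = { y | (∀ k, 0 ≤ y.1 k) ∧ (∀ k, 0 ≤ y.2.1 k) ∧
      (∀ l, 0 ≤ y.2.2.1 l) ∧ (∀ l, 0 ≤ y.2.2.2 l) ∧
      (∀ k, y.1 k + y.2.1 k ≤ 1) ∧ (∀ l, y.2.2.1 l + y.2.2.2 l ≤ 1) ∧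
      (∀ l, y.2.2.2 l ≤ 1 - 1 / (n : ℝ)) })
    -- the coupled contact rate as a function of the state
    (c : ((Fin K → ℝ) × (Fin K → ℝ) × (Fin L → ℝ) × (Fin L → ℝ)) →
      Fin K → Fin K → ℝ)
    (hc : ∀ y k j, c y k j =
      cp k j + (∑ l : Fin L, z k l * y.2.2.2 l * H l) *
        (∑ l : Fin L, z k l * (1 - y.2.2.2 l)⁻¹) * ch k j / NH k)
    -- the diffusion map, collecting all 3K + 3L coefficients
    (σ : ((Fin K → ℝ) × (Fin K → ℝ) × (Fin L → ℝ) × (Fin L → ℝ)) →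
      ((Fin K → ℝ) × (Fin K → ℝ) × (Fin K → ℝ)) ×
      ((Fin L → ℝ) × (Fin L → ℝ) × (Fin L → ℝ)))
    (hσ : ∀ y, σ y =
      ((fun k => Real.sqrt (α / N k * y.1 k * ∑ j : Fin K, c y k j * y.2.1 j),
        fun k => -Real.sqrt (α / N k * y.1 k * ∑ j : Fin K, c y k j * y.2.1 j),
        fun k => Real.sqrt (β k * y.2.1 k / N k)),
       (fun l => Real.sqrt (α / H l * (y.2.2.1 l / H l) *
          ∑ k : Fin K, z k l * N k * y.1 k * ∑ j : Fin K, cp k j * y.2.1 j),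
        fun l => -Real.sqrt (α / H l * (y.2.2.1 l / H l) *
          ∑ k : Fin K, z k l * N k * y.1 k * ∑ j : Fin K, cp k j * y.2.1 j),
        fun l => Real.sqrt (ν l * y.2.2.2 l / H l)))) :
    ∃ C : ℝ, 0 ≤ C ∧
      (∀ y ∈ Un, ∀ y' ∈ Un, ‖σ y - σ y'‖ ^ 2 ≤ C * ‖y - y'‖) ∧
      (∀ y ∈ Un, ∀ y' ∈ Un,
        ‖σ y - σ y'‖ ^ 2 ≤ C * Real.sqrt (‖y - y'‖ ^ 2)) :=
  diffusion_holder_half_general K L α β ν N NH H z cp ch n hn Un hUn c hc σ hσ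
end
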